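/- Let G be a connected bipartite graph with parts A, B, and let T be a HIST of G. Suppose every vertex of S(T) ∩ B has degree at least 3 in T, and |S(T) ∩ B| > (|A| − 1)/2. Then the forest T' induced on the edges of T incident to S(T) ∩ B satisfies |V(T') ∩ A| ≥ 2|S(T) ∩ B| + 1, and hence |A| ≥ 2|S(T) ∩ B| + 1, a contradiction; i.e., in any HIST T of a bipartite graph G(A,B), we have |S(T) ∩ B| ≤ (|A| − 1)/2 whenever the above degree condition holds. -/

import Mathlib

/-!
Every edge of `T` has exactly one endpoint in `B`, so `|E(T)| = ∑_{v ∈ B} deg_T v`. Leaves of `B`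
contribute `1` to this sum and the non-leaves of `B` at least `3`, hence
`|E(T)| ≥ |B| + 2|S(T) ∩ B|`. Since `T` is a spanning tree, `|E(T)| = |A| + |B| - 1`.
-/

open Finset SimpleGraph

theorem Finset.two_mul_card_filter_ne_one_add_card_le_sum {ι : Type*} (s : Finset ι) (f : ι → ℕ)
    (h : ∀ i ∈ s, f i ≠ 1 → 3 ≤ f i) :
    2 * #{i ∈ s | f i ≠ 1} + #s ≤ ∑ i ∈ s, f i := by
  rw [card_filter, mul_sum, card_eq_sum_ones, ← sum_add_distrib]
  refine sum_le_sum fun i hi => ?_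
  split_ifs with hfi
  · linarith [h i hi hfi]
  · omega

namespace SimpleGraph

variable {V : Type*} {G T : SimpleGraph V} {s t : Set V}

lemma ncard_neighborSet_eq_degree (G : SimpleGraph V) (v : V) [Fintype (G.neighborSet v)] :
    (G.neighborSet v).ncard = G.degree v := by
  rw [Set.ncard_eq_toFinset_card', Set.toFinset_card, card_neighborSet_eq_degree]

lemma isBipartiteWith_of_adj_iff (hpart : ∀ v, v ∈ s ↔ v ∉ t)
    (hadj : ∀ u v, G.Adj u v → (u ∈ s ↔ v ∈ t)) : G.IsBipartiteWith s t where
  disjoint := Set.disjoint_left.mpr fun v hs => (hpart v).mp hs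
  mem_of_adj u v huv := by
    have := hadj u v huv
    have := hpart u
    have := hpart v
    tauto

lemma IsBipartiteWith.mono (h : G.IsBipartiteWith s t) (hle : T ≤ G) :
    T.IsBipartiteWith s t :=
  ⟨h.disjoint, fun _ _ huv => h.mem_of_adj (hle huv)⟩

theorem IsTree.two_mul_card_filter_degree_ne_one_add_one_le [Fintype V] [DecidableRel T.Adj]
    (hT : T.IsTree) {s t : Finset V} (h : T.IsBipartiteWith s t) (hst : #s + #t = Fintype.card V)
    (hdeg : ∀ v ∈ t, T.degree v ≠ 1 → 3 ≤ T.degree v) :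
    2 * #{v ∈ t | T.degree v ≠ 1} + 1 ≤ #s := by
  have hedges : #T.edgeFinset + 1 = Fintype.card V := hT.card_edgeFinset
  have hsum : ∑ v ∈ t, T.degree v = #T.edgeFinset := isBipartiteWith_sum_degrees_eq_card_edges' h
  have hcount := t.two_mul_card_filter_ne_one_add_card_le_sum (T.degree ·) hdeg
  omega

end SimpleGraph

theorem stmt_18_general {V : Type*} [Fintype V] (G T : SimpleGraph V) (A B : Set V)
    (hpart : ∀ v : V, v ∈ A ↔ v ∉ B)
    (hbip : ∀ u v : V, G.Adj u v → (u ∈ A ↔ v ∈ B))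
    (hTG : T ≤ G) (hTree : T.IsTree)
    (hdeg : ∀ v ∈ {v : V | (T.neighborSet v).ncard ≠ 1} ∩ B,
      3 ≤ (T.neighborSet v).ncard) :
    2 * ({v : V | (T.neighborSet v).ncard ≠ 1} ∩ B).ncard + 1 ≤ A.ncard := by
  classical
  have hT : T.IsBipartiteWith (A.toFinset : Set V) (B.toFinset : Set V) := by
    simpa using (isBipartiteWith_of_adj_iff hpart hbip).mono hTG
  have hcover : #A.toFinset + #B.toFinset = Fintype.card V := by
    rw [← card_union_of_disjoint (by simpa using hT.disjoint), ← card_univ]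
    congr 1
    ext v
    simpa [hpart] using em' (v ∈ B)
  have hS : {v : V | (T.neighborSet v).ncard ≠ 1} ∩ B = ↑{v ∈ B.toFinset | T.degree v ≠ 1} := by
    ext v
    simp [ncard_neighborSet_eq_degree, and_comm]
  have hdegB : ∀ v ∈ B.toFinset, T.degree v ≠ 1 → 3 ≤ T.degree v := fun v hv hv1 => by
    simpa [ncard_neighborSet_eq_degree] using hdeg v (hS ▸ by simp_all)
  rw [hS, Set.ncard_coe_finset, Set.ncard_eq_toFinset_card']
  exact hTree.two_mul_card_filter_degree_ne_one_add_one_le hT hcover hdegB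

/-- Let `G` be a connected bipartite graph with parts `A`, `B`, and let `T` be a HIST of
`G` (a spanning tree with no vertex of degree 2).  If every vertex of `S(T) ∩ B` has
degree at least 3 in `T`, then `|S(T) ∩ B| ≤ (|A| − 1)/2`, i.e.
`2|S(T) ∩ B| + 1 ≤ |A|`, where `S(T)` is the set of non-leaves of `T`. -/
theorem stmt_18 {V : Type*} [Fintype V] (G T : SimpleGraph V) (A B : Set V)
    (hpart : ∀ v : V, v ∈ A ↔ v ∉ B)
    (hbip : ∀ u v : V, G.Adj u v → (u ∈ A ↔ v ∈ B))
    (hconn : G.Connected)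
    (hTG : T ≤ G) (hTree : T.IsTree)
    (hHIST : ∀ v : V, (T.neighborSet v).ncard ≠ 2)
    (hdeg : ∀ v ∈ {v : V | (T.neighborSet v).ncard ≠ 1} ∩ B,
      3 ≤ (T.neighborSet v).ncard) :
    2 * ({v : V | (T.neighborSet v).ncard ≠ 1} ∩ B).ncard + 1 ≤ A.ncard :=
  stmt_18_general G T A B hpart hbip hTG hTree hdeg
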